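/- Let G be a simple graph on n vertices and let k be an integer with 2 ≤ k ≤ n/2. Then α(F_k(G)) ≤ α(F_{k−1}(G)); consequently α(G) ≥ α(F_2(G)) ≥ α(F_3(G)) ≥ ⋯ ≥ α(F_{⌊n/2⌋}(G)). -/

import Mathlib

open Finset Polynomial Real Matrix

noncomputable section

/-- The `k`-token graph of a simple graph `G`. -/
def tokenGraph {V : Type*} [DecidableEq V] (G : SimpleGraph V) (k : ℕ) :
    SimpleGraph {s : Finset V // s.card = k} where
  Adj A B := ∃ a b, G.Adj a b ∧ a ∈ A.1 ∧ b ∈ B.1 ∧ symmDiff A.1 B.1 = {a, b}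
  symm := by
    constructor
    rintro A B ⟨a, b, hab, ha, hb, hd⟩
    exact ⟨b, a, hab.symm, hb, ha, by rw [symmDiff_comm, hd, Finset.pair_comm]⟩
  loopless := by
    constructor
    rintro A ⟨a, b, hab, ha, hb, hd⟩
    rw [symmDiff_self, Finset.bot_eq_empty] at hd
    exact (Finset.insert_ne_empty a {b}) hd.symm

/-- The Laplacian matrix (over ℝ) of a finite simple graph. -/
def lapMat {V : Type*} [Fintype V] [DecidableEq V] (G : SimpleGraph V) : Matrix V V ℝ :=
  letI := Classical.decRel G.Adj
  G.lapMatrix ℝ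

/-- The Laplacian matrix (over ℂ) of a finite simple graph. -/
def lapMatC {V : Type*} [Fintype V] [DecidableEq V] (G : SimpleGraph V) : Matrix V V ℂ :=
  letI := Classical.decRel G.Adj
  G.lapMatrix ℂ

/-- The Laplacian eigenvalues of `G`, with multiplicity, in nondecreasing order. -/
def lapSpec {V : Type*} [Fintype V] [DecidableEq V] (G : SimpleGraph V) : List ℝ :=
  ((lapMat G).charpoly.roots).sort (· ≤ ·)

/-- The algebraic connectivity: the second-smallest Laplacian eigenvalue. -/
def algConn {V : Type*} [Fintype V] [DecidableEq V] (G : SimpleGraph V) : ℝ :=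
  (lapSpec G).getD 1 0

/-- The largest Laplacian eigenvalue (Laplacian spectral radius). -/
def lapSpecRadius {V : Type*} [Fintype V] [DecidableEq V] (G : SimpleGraph V) : ℝ :=
  (lapSpec G).getLastD 0

/-- `μ` is an eigenvalue of the Laplacian matrix of `G`. -/
def IsLapEigen {V : Type*} [Fintype V] [DecidableEq V] (G : SimpleGraph V) (μ : ℝ) : Prop :=
  ∃ v : V → ℝ, v ≠ 0 ∧ (lapMat G).mulVec v = μ • v

/-- The induced subgraph of `G` on the complement of the vertex `i` (i.e. `G ∖ i`). -/
def deleteVert {V : Type*} (G : SimpleGraph V) (i : V) : SimpleGraph {v : V // v ≠ i} :=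
  SimpleGraph.comap Subtype.val G

/-- The cycle graph on `ℤ/nℤ`, where `i` is adjacent to `i ± 1`. -/
def cycleG (n : ℕ) : SimpleGraph (ZMod n) where
  Adj x y := x ≠ y ∧ (x - y = 1 ∨ y - x = 1)
  symm := by constructor; rintro x y ⟨hxy, h⟩; exact ⟨hxy.symm, h.symm⟩
  loopless := by constructor; rintro x ⟨hx, _⟩; exact hx rfl

/-- The inclusion matrix from `h`-subsets to `k`-subsets: rows indexed by `k`-subsets `A`,
columns by `h`-subsets `X`, with entry `1` if `X ⊆ A` and `0` otherwise. -/
def inclMatrix (V : Type*) [Fintype V] [DecidableEq V] (h k : ℕ) :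
    Matrix {s : Finset V // s.card = k} {s : Finset V // s.card = h} ℝ :=
  fun A X => if X.1 ⊆ A.1 then 1 else 0

/-- The `(n;k)`-binomial matrix: rows indexed by `k`-subsets `A`, columns by vertices `j`,
with entry `1` if `j ∈ A` and `0` otherwise. -/
def binomMatrix (V : Type*) [Fintype V] [DecidableEq V] (k : ℕ) :
    Matrix {s : Finset V // s.card = k} V ℝ :=
  fun A j => if j ∈ A.1 then 1 else 0

/-- The Kneser graph `K(n,k)`. -/
def kneserGraph (n k : ℕ) : SimpleGraph {s : Finset (Fin n) // s.card = k} where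
  Adj A B := A ≠ B ∧ Disjoint A.1 B.1
  symm := by constructor; rintro A B ⟨h1, h2⟩; exact ⟨h1.symm, h2.symm⟩
  loopless := by constructor; rintro A ⟨h1, _⟩; exact h1 rfl

end


noncomputable section

/-!
The Laplacian of `G`, and that of every token graph `F_k(G)`, is half of the operator
`f ↦ ∑_{G.Adj a b} (f - f ∘ (a b))`, where the transposition `(a b)` acts on vertices,
resp. on `k`-sets. Hence every `Perm V`-equivariant matrix intertwines these Laplacians; this
applies to the inclusion matrix `W` of `k`-sets into `(k+1)`-sets and to the vertex-in-pair
matrix. An injective intertwiner maps generalized eigenspaces injectively into generalized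
eigenspaces, so the Laplacian spectrum of the smaller graph is a submultiset of that of the
larger one, and the second smallest eigenvalue can only go down. `W` is injective for `2k < n`
because `WᵀW = W'W'ᵀ + (n - 2k) • 1`, with `W'` the inclusion matrix of `(k-1)`-sets into
`k`-sets.
-/

open scoped Pointwise

open Module in
theorem Module.End.finrank_maxGenEigenspace_le_of_comp_eq {K M N : Type*} [Field K]
    [AddCommGroup M] [Module K M] [AddCommGroup N] [Module K N] [FiniteDimensional K N]
    {φ : Module.End K M} {ψ : Module.End K N} {f : M →ₗ[K] N} (hf : Function.Injective f)
    (h : ψ ∘ₗ f = f ∘ₗ φ) (μ : K) :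
    finrank K (φ.maxGenEigenspace μ) ≤ finrank K (ψ.maxGenEigenspace μ) := by
  have hμ : (ψ - μ • 1) ∘ₗ f = f ∘ₗ (φ - μ • 1) := by
    ext v; simpa using congr($h v)
  have hmap : (φ.maxGenEigenspace μ).map f ≤ ψ.maxGenEigenspace μ := by
    rintro _ ⟨v, hv, rfl⟩
    obtain ⟨k, hk⟩ := (Module.End.mem_maxGenEigenspace _ _ _).1 hv
    refine (Module.End.mem_maxGenEigenspace _ _ _).2 ⟨k, ?_⟩
    rw [← LinearMap.comp_apply, Module.End.commute_pow_left_of_commute hμ, LinearMap.comp_apply,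
      hk, map_zero]
  calc finrank K (φ.maxGenEigenspace μ)
      = finrank K ((φ.maxGenEigenspace μ).map f) :=
        (Submodule.equivMapOfInjective f hf _).finrank_eq
    _ ≤ _ := Submodule.finrank_mono hmap

theorem Matrix.charpoly_roots_le_of_mul_eq {K α β : Type*} [Field K] [Fintype α] [DecidableEq α]
    [Fintype β] [DecidableEq β] {A : Matrix α α K} {A' : Matrix β β K} {B : Matrix β α K}
    (hB : Function.Injective B.mulVec) (h : A' * B = B * A) :
    A.charpoly.roots ≤ A'.charpoly.roots := by
  classical
  refine Multiset.le_iff_count.2 fun μ => ?_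
  rw [Polynomial.count_roots, Polynomial.count_roots, ← Matrix.charpoly_toLin',
    ← Matrix.charpoly_toLin', ← LinearMap.finrank_maxGenEigenspace_eq,
    ← LinearMap.finrank_maxGenEigenspace_eq]
  refine Module.End.finrank_maxGenEigenspace_le_of_comp_eq (f := B.toLin') hB ?_ μ
  rw [← Matrix.toLin'_mul, ← Matrix.toLin'_mul, h]

theorem List.Sublist.getElem_le_getElem_of_pairwise {α : Type*} [Preorder α] {l₁ l₂ : List α}
    (h : l₁.Sublist l₂) (hs : l₂.Pairwise (· ≤ ·)) {i : ℕ} (hi : i < l₁.length) :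
    l₂[i]'(hi.trans_le h.length_le) ≤ l₁[i] := by
  induction h generalizing i with
  | slnil => simp at hi
  | @cons l₁ l₂ a h ih =>
    have hi₂ : i + 1 < (a :: l₂).length := by simpa using hi.trans_le h.length_le
    calc (a :: l₂)[i] ≤ (a :: l₂)[i + 1] :=
          List.pairwise_iff_getElem.1 hs i (i + 1) (by omega) hi₂ (Nat.lt_succ_self i)
      _ ≤ l₁[i] := ih hs.of_cons hi
  | cons_cons a h ih =>
    cases i with
    | zero => exact le_rfl
    | succ j => exact ih hs.of_cons (by simpa using hi)

theorem Multiset.sort_getD_le_of_le {s t : Multiset ℝ} (hst : s ≤ t) {i : ℕ}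
    (hi : i < Multiset.card s) :
    (t.sort (· ≤ ·)).getD i 0 ≤ (s.sort (· ≤ ·)).getD i 0 := by
  have hsub : (s.sort (· ≤ ·)).Sublist (t.sort (· ≤ ·)) :=
    List.sublist_of_subperm_of_pairwise (by rwa [← Multiset.coe_le, Multiset.sort_eq,
      Multiset.sort_eq]) (Multiset.pairwise_sort _ _) (Multiset.pairwise_sort _ _)
  have hi' : i < (s.sort (· ≤ ·)).length := by rwa [Multiset.length_sort]
  rw [List.getD_eq_getElem _ _ hi', List.getD_eq_getElem _ _ (hi'.trans_le hsub.length_le)]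
  exact hsub.getElem_le_getElem_of_pairwise (Multiset.pairwise_sort _ _) hi'


section Laplacian

variable {α β : Type*} [Fintype α] [DecidableEq α] [Fintype β] [DecidableEq β]

theorem lapMat_eq_lapMatrix (H : SimpleGraph α) [DecidableRel H.Adj] :
    lapMat H = H.lapMatrix ℝ := by
  unfold lapMat; congr

theorem lapMat_mulVec_apply (H : SimpleGraph α) [DecidableRel H.Adj] (f : α → ℝ) (x : α) :
    (lapMat H *ᵥ f) x = ∑ y ∈ H.neighborFinset x, (f x - f y) := by
  rw [lapMat_eq_lapMatrix, SimpleGraph.lapMatrix_mulVec_apply, Finset.sum_sub_distrib,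
    Finset.sum_const, SimpleGraph.card_neighborFinset_eq_degree, nsmul_eq_mul]

theorem card_roots_charpoly_lapMat (H : SimpleGraph α) :
    Multiset.card (lapMat H).charpoly.roots = Fintype.card α := by
  classical
  have hH : (lapMat H).IsHermitian := by
    rw [lapMat_eq_lapMatrix]
    exact Matrix.isHermitian_iff_isSymm.2 (H.isSymm_lapMatrix ℝ)
  rw [hH.roots_charpoly_eq_eigenvalues, Multiset.card_map, Finset.card_val, Finset.card_univ]

theorem algConn_le_of_lapMat_mul_eq {H₁ : SimpleGraph α} {H₂ : SimpleGraph β}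
    {B : Matrix β α ℝ} (hB : Function.Injective B.mulVec)
    (h : lapMat H₂ * B = B * lapMat H₁) (hα : 2 ≤ Fintype.card α) : algConn H₂ ≤ algConn H₁ :=
  Multiset.sort_getD_le_of_le (Matrix.charpoly_roots_le_of_mul_eq hB h)
    (by rwa [card_roots_charpoly_lapMat])

end Laplacian

section SwapAction

variable {V : Type*} [DecidableEq V]

instance (k : ℕ) : MulAction (Equiv.Perm V) {s : Finset V // s.card = k} :=
  inferInstanceAs (MulAction (Equiv.Perm V) (Set.powersetCard V k))

theorem coe_perm_smul_kset {k : ℕ} (σ : Equiv.Perm V) (A : {s : Finset V // s.card = k}) :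
    ((σ • A : {s : Finset V // s.card = k}) : Finset V) = σ • (A : Finset V) := rfl

theorem mem_swap_smul_finset {a b x : V} {s : Finset V} :
    x ∈ Equiv.swap a b • s ↔ Equiv.swap a b x ∈ s := by
  rw [← Finset.inv_smul_mem_iff, Equiv.swap_inv, Equiv.Perm.smul_def]

theorem swap_smul_finset_eq_self {a b : V} {s : Finset V} (h : a ∈ s ↔ b ∈ s) :
    Equiv.swap a b • s = s := by
  ext x
  rw [mem_swap_smul_finset]
  rcases eq_or_ne x a with rfl | hxa
  · rw [Equiv.swap_apply_left, h]
  rcases eq_or_ne x b with rfl | hxb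
  · rw [Equiv.swap_apply_right, h]
  · rw [Equiv.swap_apply_of_ne_of_ne hxa hxb]

theorem swap_smul_finset_inj {s : Finset V} {a b a' b' : V} (ha : a ∈ s) (hb : b ∉ s)
    (ha' : a' ∈ s) (hb' : b' ∉ s) (h : Equiv.swap a b • s = Equiv.swap a' b' • s) :
    a = a' ∧ b = b' := by
  have hx : ∀ x, Equiv.swap a b x ∈ s ↔ Equiv.swap a' b' x ∈ s := fun x => by
    rw [← mem_swap_smul_finset, h, mem_swap_smul_finset]
  have hxa := hx a
  have hxb := hx b
  simp only [Equiv.swap_apply_def] at hxa hxb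
  constructor <;> split_ifs at hxa hxb <;> grind

theorem tokenGraph_adj_iff {G : SimpleGraph V} {k : ℕ} {A C : {s : Finset V // s.card = k}} :
    (tokenGraph G k).Adj A C ↔
      ∃ a b, G.Adj a b ∧ a ∈ A.1 ∧ b ∉ A.1 ∧ C = Equiv.swap a b • A := by
  constructor
  · rintro ⟨a, b, hab, ha, hb, hd⟩
    have hmem : ∀ x, x ∈ A.1 ∧ x ∉ C.1 ∨ x ∈ C.1 ∧ x ∉ A.1 ↔ x = a ∨ x = b := by
      intro x; rw [← Finset.mem_symmDiff, hd, Finset.mem_insert, Finset.mem_singleton]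
    have hbA : b ∉ A.1 := fun h => by have := (hmem b).2 (Or.inr rfl); tauto
    refine ⟨a, b, hab, ha, hbA, Subtype.ext ?_⟩
    ext x
    rw [coe_perm_smul_kset, mem_swap_smul_finset]
    rcases eq_or_ne x a with rfl | hxa
    · have := (hmem x).2 (Or.inl rfl); rw [Equiv.swap_apply_left]; tauto
    rcases eq_or_ne x b with rfl | hxb
    · rw [Equiv.swap_apply_right]; tauto
    · have := (hmem x).not.2 (by tauto); rw [Equiv.swap_apply_of_ne_of_ne hxa hxb]; tauto
  · rintro ⟨a, b, hab, ha, hb, rfl⟩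
    refine ⟨a, b, hab, ha, ?_, ?_⟩
    · rw [coe_perm_smul_kset, mem_swap_smul_finset, Equiv.swap_apply_right]; exact ha
    ext x
    rw [Finset.mem_symmDiff, coe_perm_smul_kset, mem_swap_smul_finset, Finset.mem_insert,
      Finset.mem_singleton]
    rcases eq_or_ne x a with rfl | hxa
    · rw [Equiv.swap_apply_left]; tauto
    rcases eq_or_ne x b with rfl | hxb
    · rw [Equiv.swap_apply_right]; tauto
    · rw [Equiv.swap_apply_of_ne_of_ne hxa hxb]; tauto

end SwapAction

section SwapLaplacian

variable {V α β : Type*} [Fintype V] [DecidableEq V]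

def swapLaplacian [MulAction (Equiv.Perm V) α] (G : SimpleGraph V) [DecidableRel G.Adj]
    (f : α → ℝ) (x : α) : ℝ :=
  ∑ a, ∑ b, if G.Adj a b then f x - f (Equiv.swap a b • x) else 0

/-- `P a b x` selects one orientation of each edge `{a, b}` whose transposition moves `x`. -/
theorem swapLaplacian_eq_two_mul [MulAction (Equiv.Perm V) α] (G : SimpleGraph V)
    [DecidableRel G.Adj] (P : V → V → α → Prop) [∀ a b x, Decidable (P a b x)]
    (hfix : ∀ a b x, ¬P a b x → ¬P b a x → Equiv.swap a b • x = x)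
    (hexcl : ∀ a b x, G.Adj a b → P a b x → ¬P b a x) (f : α → ℝ) (x : α) :
    swapLaplacian G f x =
      2 * ∑ a, ∑ b, if G.Adj a b ∧ P a b x then f x - f (Equiv.swap a b • x) else 0 := by
  have hsplit : ∀ a b, (if G.Adj a b then f x - f (Equiv.swap a b • x) else 0) =
      (if G.Adj a b ∧ P a b x then f x - f (Equiv.swap a b • x) else 0) +
        (if G.Adj b a ∧ P b a x then f x - f (Equiv.swap b a • x) else 0) := by
    intro a b
    by_cases hab : G.Adj a b
    · rw [Equiv.swap_comm b a]
      by_cases h₁ : P a b x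
      · simp [hab, h₁, hexcl a b x hab h₁]
      by_cases h₂ : P b a x
      · simp [hab, hab.symm, h₁, h₂]
      · simp [hab, h₁, h₂, hfix a b x h₁ h₂]
    · have hba : ¬G.Adj b a := fun h => hab h.symm
      simp [hab, hba]
  simp only [swapLaplacian, hsplit, Finset.sum_add_distrib]
  rw [Finset.sum_comm (f := fun a b => if G.Adj b a ∧ P b a x then _ else _), two_mul]

theorem two_mul_lapMat_mulVec_apply (G : SimpleGraph V) [DecidableRel G.Adj] (f : V → ℝ)
    (x : V) : 2 * (lapMat G *ᵥ f) x = swapLaplacian G f x := by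
  rw [swapLaplacian_eq_two_mul G (fun a _ x => a = x)
    (fun a b x ha hb => Equiv.swap_apply_of_ne_of_ne (Ne.symm ha) (Ne.symm hb))
    (fun a b x hab ha hb => hab.ne (ha.trans hb.symm)), lapMat_mulVec_apply]
  congr 1
  rw [Fintype.sum_eq_single x fun a ha => by simp [ha], ← Finset.sum_filter,
    SimpleGraph.neighborFinset_eq_filter]
  simp [Equiv.Perm.smul_def]

theorem two_mul_lapMat_tokenGraph_mulVec_apply (G : SimpleGraph V) [DecidableRel G.Adj]
    (k : ℕ) (f : {s : Finset V // s.card = k} → ℝ) (A : {s : Finset V // s.card = k}) :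
    2 * (lapMat (tokenGraph G k) *ᵥ f) A = swapLaplacian G f A := by
  classical
  rw [swapLaplacian_eq_two_mul G (fun a b A => a ∈ A.1 ∧ b ∉ A.1)
    (fun a b A h₁ h₂ => Subtype.ext (swap_smul_finset_eq_self (by tauto)))
    (fun a b A _ h₁ h₂ => h₂.2 h₁.1), lapMat_mulVec_apply]
  congr 1
  set D := Finset.univ.filter fun p : V × V => G.Adj p.1 p.2 ∧ p.1 ∈ A.1 ∧ p.2 ∉ A.1
  have hN : (tokenGraph G k).neighborFinset A = D.image fun p => Equiv.swap p.1 p.2 • A := by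
    ext C
    simp [D, tokenGraph_adj_iff, eq_comm, and_assoc]
  have hinj : Set.InjOn (fun p : V × V => Equiv.swap p.1 p.2 • A) D := by
    rintro ⟨a, b⟩ hab ⟨a', b'⟩ hab' h
    simp only [D, Finset.coe_filter, Finset.mem_univ, true_and] at hab hab'
    obtain ⟨rfl, rfl⟩ := swap_smul_finset_inj hab.2.1 hab.2.2 hab'.2.1 hab'.2.2
      (congrArg Subtype.val h)
    rfl
  rw [hN, Finset.sum_image hinj, Finset.sum_filter]
  exact Fintype.sum_prod_type _

variable [Fintype α] [MulAction (Equiv.Perm V) α] [MulAction (Equiv.Perm V) β]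

omit [Fintype V] [DecidableEq V] in
theorem mulVec_apply_smul_of_equivariant {B : Matrix β α ℝ}
    (hB : ∀ (σ : Equiv.Perm V) y x, B (σ • y) (σ • x) = B y x) (f : α → ℝ)
    (σ : Equiv.Perm V) (y : β) : (B *ᵥ f) (σ • y) = (B *ᵥ fun x => f (σ • x)) y :=
  (Fintype.sum_equiv (MulAction.toPerm σ) _ _ fun x => by simp [hB]).symm

theorem mulVec_swapLaplacian (G : SimpleGraph V) [DecidableRel G.Adj] {B : Matrix β α ℝ}
    (hB : ∀ (σ : Equiv.Perm V) y x, B (σ • y) (σ • x) = B y x) (f : α → ℝ) :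
    B *ᵥ swapLaplacian G f = swapLaplacian G (B *ᵥ f) := by
  funext y
  simp only [swapLaplacian, mulVec_apply_smul_of_equivariant hB]
  simp only [Matrix.mulVec, dotProduct, swapLaplacian, Finset.mul_sum]
  rw [Finset.sum_comm]
  refine Finset.sum_congr rfl fun a _ => ?_
  rw [Finset.sum_comm]
  refine Finset.sum_congr rfl fun b _ => ?_
  split_ifs <;> simp [mul_sub, Finset.sum_sub_distrib]

theorem lapMat_mul_eq_mul_lapMat [DecidableEq α] [Fintype β] [DecidableEq β]
    (G : SimpleGraph V) [DecidableRel G.Adj] {H₁ : SimpleGraph α} {H₂ : SimpleGraph β}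
    (h₁ : ∀ f x, 2 * (lapMat H₁ *ᵥ f) x = swapLaplacian G f x)
    (h₂ : ∀ f y, 2 * (lapMat H₂ *ᵥ f) y = swapLaplacian G f y) {B : Matrix β α ℝ}
    (hB : ∀ (σ : Equiv.Perm V) y x, B (σ • y) (σ • x) = B y x) :
    lapMat H₂ * B = B * lapMat H₁ := by
  have h₁' : swapLaplacian G = fun f => (2 : ℝ) • (lapMat H₁ *ᵥ f) := by
    funext f x; exact (h₁ f x).symm
  refine Matrix.toLin'.injective (LinearMap.ext fun f => funext fun y => ?_)
  have key := congrFun (mulVec_swapLaplacian G hB f) y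
  rw [← h₂, h₁', Matrix.mulVec_smul, Pi.smul_apply, smul_eq_mul] at key
  simpa [Matrix.toLin'_mul, ← Matrix.mulVec_mulVec] using key.symm

end SwapLaplacian

section InclusionMatrix

variable {V : Type*} [Fintype V] [DecidableEq V]

omit [DecidableEq V] in
theorem card_filter_kset (m : ℕ) (p : Finset V → Prop) [DecidablePred p] :
    #{A : {s : Finset V // s.card = m} | p A.1} = #{s ∈ powersetCard m univ | p s} := by
  rw [← card_map (Function.Embedding.subtype _)]
  congr 1
  ext s
  simp [and_comm]

theorem card_kset_subset (m : ℕ) (S : Finset V) :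
    #{A : {s : Finset V // s.card = m} | A.1 ⊆ S} = S.card.choose m := by
  rw [card_filter_kset m (· ⊆ S), ← card_powersetCard]
  congr 1
  ext s
  simp [and_comm]

theorem card_kset_superset {m : ℕ} {S : Finset V} (hS : S.card ≤ m) :
    #{A : {s : Finset V // s.card = m} | S ⊆ A.1} =
      (Fintype.card V - S.card).choose (m - S.card) := by
  rw [card_filter_kset m (S ⊆ ·), ← card_compl, ← card_powersetCard]
  refine card_nbij' (· \ S) (· ∪ S) ?_ ?_ ?_ ?_
  · intro s hs
    simp only [mem_coe, mem_filter, mem_powersetCard, subset_univ, true_and] at hs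
    simp [card_sdiff_of_subset hs.2, hs.1]
  · intro s hs
    simp only [mem_coe, mem_powersetCard, subset_compl_iff_disjoint_right] at hs
    simp [card_union_of_disjoint hs.1, hs.2, hS]
  · intro s hs
    simp only [mem_coe, mem_filter, mem_powersetCard, subset_univ, true_and] at hs
    simp [hs.2]
  · intro s hs
    simp only [mem_coe, mem_powersetCard, subset_compl_iff_disjoint_right] at hs
    simp [union_sdiff_cancel_right hs.1]

theorem inclMatrix_transpose_mul_apply (h k : ℕ) (X Y : {s : Finset V // s.card = h}) :
    ((inclMatrix V h k)ᵀ * inclMatrix V h k) X Y =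
      #{A : {s : Finset V // s.card = k} | X.1 ∪ Y.1 ⊆ A.1} := by
  simp [Matrix.mul_apply, inclMatrix, ← ite_and, union_subset_iff, and_comm]

theorem inclMatrix_mul_transpose_apply (h k : ℕ) (X Y : {s : Finset V // s.card = k}) :
    (inclMatrix V h k * (inclMatrix V h k)ᵀ) X Y =
      #{Z : {s : Finset V // s.card = h} | Z.1 ⊆ X.1 ∩ Y.1} := by
  simp [Matrix.mul_apply, inclMatrix, ← ite_and, subset_inter_iff, and_comm]

theorem inclMatrix_transpose_mul_inclMatrix (k : ℕ) :
    (inclMatrix V (k + 1) (k + 2))ᵀ * inclMatrix V (k + 1) (k + 2) =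
      inclMatrix V k (k + 1) * (inclMatrix V k (k + 1))ᵀ +
        ((Fintype.card V : ℝ) - 2 * (k + 1)) • 1 := by
  ext X Y
  rw [Matrix.add_apply, inclMatrix_transpose_mul_apply, inclMatrix_mul_transpose_apply,
    Matrix.smul_apply, Matrix.one_apply]
  obtain rfl | hXY := eq_or_ne X Y
  · have hX : X.1.card ≤ Fintype.card V := card_le_univ _
    rw [union_self, inter_self, card_kset_superset (by omega), card_kset_subset, X.2]
    rw [if_pos rfl, smul_eq_mul, mul_one, show k + 2 - (k + 1) = 1 by omega,
      Nat.choose_one_right, Nat.choose_succ_self_right, Nat.cast_sub (by omega)]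
    push_cast
    ring
  · have hXY' : X.1 ≠ Y.1 := fun h => hXY (Subtype.ext h)
    have hcard := card_union_add_card_inter X.1 Y.1
    have hinter : (X.1 ∩ Y.1).card < k + 1 := by
      refine lt_of_le_of_ne ((card_le_card inter_subset_left).trans_eq X.2) fun h => hXY' ?_
      have hX := eq_of_subset_of_card_le inter_subset_left (X.2.trans h.symm).le
      have hY := eq_of_subset_of_card_le inter_subset_right (Y.2.trans h.symm).le
      exact hX.symm.trans hY
    rw [if_neg hXY, smul_zero, add_zero, card_kset_subset]
    rw [X.2, Y.2] at hcard
    obtain hk | hk := eq_or_lt_of_le (Nat.le_of_lt_succ hinter)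
    · rw [card_kset_superset (by omega), show k + 2 - (X.1 ∪ Y.1).card = 0 by omega, hk,
        Nat.choose_zero_right, Nat.choose_self]
    · rw [Nat.choose_eq_zero_of_lt hk, card_eq_zero.2 (filter_eq_empty_iff.2 fun A _ hA => ?_)]
      have := card_le_card hA
      omega

theorem inclMatrix_mulVec_injective {k : ℕ} (hk : 2 * (k + 1) < Fintype.card V) :
    Function.Injective (inclMatrix V (k + 1) (k + 2)).mulVec := by
  have hpos : ((inclMatrix V (k + 1) (k + 2))ᵀ * inclMatrix V (k + 1) (k + 2)).PosDef := by
    rw [inclMatrix_transpose_mul_inclMatrix]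
    refine Matrix.PosDef.posSemidef_add ?_ (Matrix.PosDef.one.smul ?_)
    · simpa using Matrix.posSemidef_self_mul_conjTranspose (inclMatrix V k (k + 1))
    · rw [sub_pos]; exact_mod_cast hk
  intro v w hvw
  by_contra hne
  have := hpos.dotProduct_mulVec_pos (sub_ne_zero.2 hne)
  rw [← Matrix.mulVec_mulVec, Matrix.mulVec_sub, hvw, sub_self, Matrix.mulVec_zero,
    dotProduct_zero] at this
  exact lt_irrefl _ this

theorem binomMatrix_mulVec_apply (k : ℕ) (v : V → ℝ) (A : {s : Finset V // s.card = k}) :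
    (binomMatrix V k *ᵥ v) A = ∑ j ∈ A.1, v j := by
  simp [Matrix.mulVec, dotProduct, binomMatrix]

theorem binomMatrix_two_mulVec_injective (hV : 3 ≤ Fintype.card V) :
    Function.Injective (binomMatrix V 2).mulVec := by
  rw [← Matrix.coe_mulVecLin, injective_iff_map_eq_zero]
  intro v hv
  have hpair : ∀ x y, x ≠ y → v x + v y = 0 := fun x y hxy => by
    simpa [binomMatrix_mulVec_apply, hxy] using congrFun hv ⟨{x, y}, card_pair hxy⟩
  funext x
  obtain ⟨y, hy, z, hz, hyz⟩ := one_lt_card.1 (show 1 < (univ.erase x).card by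
    rw [card_erase_of_mem (mem_univ x), card_univ]; omega)
  rw [mem_erase] at hy hz
  have hxy := hpair x y hy.1.symm
  have hxz := hpair x z hz.1.symm
  have hyz' := hpair y z hyz
  simp only [Pi.zero_apply]
  linarith

theorem inclMatrix_smul_smul (h k : ℕ) (σ : Equiv.Perm V) (A : {s : Finset V // s.card = k})
    (X : {s : Finset V // s.card = h}) :
    inclMatrix V h k (σ • A) (σ • X) = inclMatrix V h k A X := by
  simp [inclMatrix, coe_perm_smul_kset, Finset.smul_finset_subset_smul_finset_iff]

theorem binomMatrix_smul_smul (k : ℕ) (σ : Equiv.Perm V) (A : {s : Finset V // s.card = k})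
    (x : V) : binomMatrix V k (σ • A) (σ • x) = binomMatrix V k A x := by
  simp only [binomMatrix, coe_perm_smul_kset, Finset.smul_mem_smul_finset_iff]

omit [DecidableEq V] in
theorem two_le_card_kset {m : ℕ} (hm : 0 < m) (hmV : m < Fintype.card V) :
    2 ≤ Fintype.card {s : Finset V // s.card = m} := by
  rw [Fintype.card_finset_len]
  obtain ⟨n, hn⟩ : ∃ n, Fintype.card V = n + 1 := ⟨Fintype.card V - 1, by omega⟩
  obtain ⟨j, rfl⟩ : ∃ j, m = j + 1 := ⟨m - 1, by omega⟩
  rw [hn, Nat.choose_succ_succ']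
  have := Nat.choose_pos (show j ≤ n by omega)
  have := Nat.choose_pos (show j + 1 ≤ n by omega)
  omega

end InclusionMatrix

theorem algConn_tokenGraph_succ_le {V : Type*} [Fintype V] [DecidableEq V] (G : SimpleGraph V)
    {k : ℕ} (hk : 2 * (k + 1) < Fintype.card V) :
    algConn (tokenGraph G (k + 2)) ≤ algConn (tokenGraph G (k + 1)) := by
  classical
  exact algConn_le_of_lapMat_mul_eq (inclMatrix_mulVec_injective hk)
    (lapMat_mul_eq_mul_lapMat G (two_mul_lapMat_tokenGraph_mulVec_apply G _)
      (two_mul_lapMat_tokenGraph_mulVec_apply G _) (inclMatrix_smul_smul _ _))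
    (two_le_card_kset k.succ_pos (by omega))

theorem algConn_tokenGraph_two_le {V : Type*} [Fintype V] [DecidableEq V] (G : SimpleGraph V)
    (hV : 3 ≤ Fintype.card V) : algConn (tokenGraph G 2) ≤ algConn G := by
  classical
  exact algConn_le_of_lapMat_mul_eq (binomMatrix_two_mulVec_injective hV)
    (lapMat_mul_eq_mul_lapMat G (two_mul_lapMat_mulVec_apply G)
      (two_mul_lapMat_tokenGraph_mulVec_apply G _) (binomMatrix_smul_smul _))
    (by omega)

theorem stmt_3 {n k : ℕ} (G : SimpleGraph (Fin n)) (hk : 2 ≤ k) (hkn : k ≤ n / 2) :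
    algConn (tokenGraph G k) ≤ algConn (tokenGraph G (k - 1)) ∧
      algConn (tokenGraph G 2) ≤ algConn G := by
  obtain ⟨j, rfl⟩ : ∃ j, k = j + 2 := ⟨k - 2, by omega⟩
  have hn : 2 * (j + 2) ≤ Fintype.card (Fin n) := by rw [Fintype.card_fin]; omega
  exact ⟨algConn_tokenGraph_succ_le G (by omega), algConn_tokenGraph_two_le G (by omega)⟩

end
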